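/- Let u be a C² radial function on ℝ² satisfying u'' + u'/r + e^{2u} ≤ 0 with u'(0)=0. Then ∫_{ℝ²} e^{2u(|x|)} dx ≤ 4π. -/

import Mathlib

/-!
Write `A(r)` for the area of the disc of radius `r` and `l(r)` for the length of its boundary
in the metric `e^{2u}|dx|²`. Integrating the inequality over the disc gives the flux bound
`2π r u'(r) ≤ -A(r)`. With it, `4πA - A² - l²` has nonnegative derivative and vanishes at `0`,
so `l² ≤ 4πA - A²`. Hence `A(r) ≤ 4π` for every `r`, and the total area is the supremum
of the `A(r)`.
-/

open Real MeasureTheory Set Metric Module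
open scoped ENNReal

theorem lintegral_fun_norm_addHaar {E : Type*} [NormedAddCommGroup E] [NormedSpace ℝ E]
    [MeasurableSpace E] [BorelSpace E] [FiniteDimensional ℝ E] [Nontrivial E]
    (μ : Measure E) [μ.IsAddHaarMeasure] {f : ℝ → ℝ≥0∞} (hf : Measurable f) :
    ∫⁻ x, f ‖x‖ ∂μ = μ.toSphere univ *
      ∫⁻ y in Ioi (0:ℝ), ENNReal.ofReal (y ^ (finrank ℝ E - 1)) * f y := by
  have hf_snd : Measurable fun p : sphere (0 : E) 1 × Ioi (0 : ℝ) => f p.2 :=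
    hf.comp (measurable_subtype_coe.comp measurable_snd)
  calc
    ∫⁻ x, f ‖x‖ ∂μ = ∫⁻ x : ({0}ᶜ : Set E), f ‖x.1‖ ∂(μ.comap (↑)) := by
      rw [lintegral_subtype_comap (measurableSet_singleton (0:E)).compl (fun x => f ‖x‖),
        restrict_compl_singleton]
    _ = ∫⁻ p : sphere (0 : E) 1 × Ioi (0 : ℝ), f p.2
        ∂(μ.toSphere.prod (.volumeIoiPow (finrank ℝ E - 1))) := by
      rw [← μ.measurePreserving_homeomorphUnitSphereProd.lintegral_comp hf_snd]
      simp
    _ = μ.toSphere univ * ∫⁻ y : Ioi (0:ℝ), f y ∂(.volumeIoiPow (finrank ℝ E - 1)) := by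
      rw [lintegral_prod _ hf_snd.aemeasurable]
      simp [mul_comm]
    _ = _ := by
      rw [Measure.volumeIoiPow, lintegral_withDensity_eq_lintegral_mul _
        (measurable_subtype_coe.pow_const _).ennreal_ofReal
        (by exact hf.comp measurable_subtype_coe)]
      exact congrArg _ (lintegral_subtype_comap measurableSet_Ioi
        fun y => ENNReal.ofReal (y ^ (finrank ℝ E - 1)) * f y)

theorem lintegral_fun_norm_euclideanSpace_fin_two {f : ℝ → ℝ≥0∞} (hf : Measurable f) :
    ∫⁻ x : EuclideanSpace ℝ (Fin 2), f ‖x‖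
      = ENNReal.ofReal (2 * π) * ∫⁻ r in Ioi 0, ENNReal.ofReal r * f r := by
  rw [lintegral_fun_norm_addHaar volume hf, Measure.toSphere_apply_univ,
    EuclideanSpace.volume_ball_fin_two, finrank_euclideanSpace_fin]
  norm_num [ENNReal.ofReal_mul]

theorem monotoneOn_Ici_of_hasDerivAt_nonneg {f f' : ℝ → ℝ} {a : ℝ}
    (hf : ∀ x, HasDerivAt f (f' x) x) (hf' : ∀ x, a < x → 0 ≤ f' x) :
    MonotoneOn f (Ici a) :=
  monotoneOn_of_hasDerivWithinAt_nonneg (convex_Ici a)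
    (fun x _ => (hf x).continuousAt.continuousWithinAt) (fun x _ => (hf x).hasDerivWithinAt)
    (fun x hx => hf' x (by rwa [interior_Ici] at hx))

theorem lintegral_Ioi_ofReal_le_of_intervalIntegral_le {f : ℝ → ℝ} {C : ℝ}
    (hf : ∀ R, IntegrableOn f (Ioc 0 R)) (hf_nonneg : ∀ x, 0 < x → 0 ≤ f x)
    (hC : ∀ R, 0 ≤ R → ∫ x in (0:ℝ)..R, f x ≤ C) :
    ∫⁻ x in Ioi 0, ENNReal.ofReal (f x) ≤ ENNReal.ofReal C := by
  have hIoi : ⋃ n : ℕ, Ioc (0:ℝ) n = Ioi 0 :=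
    iUnion_Ioc_eq_Ioi_self_iff.2 fun x _ => exists_nat_ge x
  rw [← hIoi, setLIntegral_iUnion_of_directed _
    (Monotone.directed_le fun m n hmn => Ioc_subset_Ioc_right (Nat.cast_le.2 hmn))]
  refine iSup_le fun n => ?_
  rw [← ofReal_integral_eq_lintegral_ofReal (hf n)
    ((ae_restrict_iff' measurableSet_Ioc).2 (.of_forall fun x hx => hf_nonneg x hx.1)),
    ← intervalIntegral.integral_of_le n.cast_nonneg]
  exact ENNReal.ofReal_le_ofReal (hC n n.cast_nonneg)

def RadialLiouvilleSupersolution (u : ℝ → ℝ) : Prop :=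
  ∀ r, 0 < r → deriv (deriv u) r + deriv u r / r + exp (2 * u r) ≤ 0

noncomputable def conformalArea (u : ℝ → ℝ) (r : ℝ) : ℝ :=
  2 * π * ∫ s in (0:ℝ)..r, s * exp (2 * u s)

noncomputable def conformalLength (u : ℝ → ℝ) (r : ℝ) : ℝ :=
  2 * π * r * exp (u r)

section Liouville

variable {u : ℝ → ℝ}

theorem conformalArea_zero : conformalArea u 0 = 0 := by
  simp [conformalArea]

theorem conformalArea_nonneg {r : ℝ} (hr : 0 ≤ r) : 0 ≤ conformalArea u r :=
  mul_nonneg (by positivity)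
    (intervalIntegral.integral_nonneg hr fun s hs => mul_nonneg hs.1 (exp_pos _).le)

theorem hasDerivAt_conformalArea (hu : Continuous u) (r : ℝ) :
    HasDerivAt (conformalArea u) (2 * π * (r * exp (2 * u r))) r :=
  ((by fun_prop : Continuous fun s => s * exp (2 * u s)).integral_hasStrictDerivAt 0 r)
    |>.hasDerivAt.const_mul _

theorem conformalArea_le_neg_mul_deriv (hu : ContDiff ℝ 2 u)
    (hineq : RadialLiouvilleSupersolution u) {r : ℝ} (hr : 0 ≤ r) :
    conformalArea u r ≤ -(2 * π * r * deriv u r) := by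
  have hu'' : Differentiable ℝ (deriv u) :=
    ((contDiff_succ_iff_deriv (n := 1)).1 hu).2.2.differentiable one_ne_zero
  have hderiv (x : ℝ) : HasDerivAt (fun x => -(2 * π * x * deriv u x + conformalArea u x))
      (-(2 * π * 1 * deriv u x + 2 * π * x * deriv (deriv u) x
        + 2 * π * (x * exp (2 * u x)))) x :=
    ((((hasDerivAt_id x).const_mul (2 * π)).mul (hu'' x).hasDerivAt).add
      (hasDerivAt_conformalArea hu.continuous x)).neg
  have hmono := monotoneOn_Ici_of_hasDerivAt_nonneg (a := 0) hderiv fun x hx => by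
    have hfactor : 2 * π * 1 * deriv u x + 2 * π * x * deriv (deriv u) x
        + 2 * π * (x * exp (2 * u x))
        = 2 * π * x * (deriv (deriv u) x + deriv u x / x + exp (2 * u x)) := by
      field_simp; ring
    rw [hfactor]
    exact neg_nonneg.2 (mul_nonpos_of_nonneg_of_nonpos (by positivity) (hineq x hx))
  have h := hmono self_mem_Ici hr hr
  simp only [mul_zero, zero_mul, conformalArea_zero, add_zero, neg_zero] at h
  linarith

theorem conformalLength_sq_le (hu : ContDiff ℝ 2 u) (hineq : RadialLiouvilleSupersolution u)
    {r : ℝ} (hr : 0 ≤ r) :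
    conformalLength u r ^ 2 ≤ 4 * π * conformalArea u r - conformalArea u r ^ 2 := by
  have hderiv (x : ℝ) : HasDerivAt
      (fun x => 4 * π * conformalArea u x - conformalArea u x ^ 2 - conformalLength u x ^ 2)
      (4 * π * (2 * π * (x * exp (2 * u x)))
        - 2 * conformalArea u x ^ 1 * (2 * π * (x * exp (2 * u x)))
        - 2 * conformalLength u x ^ 1 *
          (2 * π * 1 * exp (u x) + 2 * π * x * (exp (u x) * deriv u x))) x := by
    have hA := hasDerivAt_conformalArea hu.continuous x
    have hl : HasDerivAt (conformalLength u)
        (2 * π * 1 * exp (u x) + 2 * π * x * (exp (u x) * deriv u x)) x :=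
      ((hasDerivAt_id x).const_mul (2 * π)).mul
        (hu.differentiable (by norm_num) x).hasDerivAt.exp
    exact ((hA.const_mul (4 * π)).sub (hA.pow 2)).sub (hl.pow 2)
  have hmono := monotoneOn_Ici_of_hasDerivAt_nonneg (a := 0) hderiv fun x hx => by
    have hflux := conformalArea_le_neg_mul_deriv hu hineq hx.le
    have hexp : exp (2 * u x) = exp (u x) ^ 2 := by rw [← exp_nat_mul]; norm_num
    rw [hexp, conformalLength]
    nlinarith [mul_nonneg (by positivity : 0 ≤ 4 * π * x * exp (u x) ^ 2)
      (neg_nonneg.2 (show conformalArea u x + 2 * π * x * deriv u x ≤ 0 by linarith))]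
  simpa [conformalArea_zero, conformalLength] using hmono self_mem_Ici hr hr

theorem conformalArea_le_four_pi (hu : ContDiff ℝ 2 u) (hineq : RadialLiouvilleSupersolution u)
    {r : ℝ} (hr : 0 ≤ r) :
    conformalArea u r ≤ 4 * π := by
  nlinarith [conformalLength_sq_le hu hineq hr, conformalArea_nonneg (u := u) hr,
    sq_nonneg (conformalLength u r), pi_pos]

end Liouville

theorem stmt_10_general (u : ℝ → ℝ) (hu : ContDiff ℝ 2 u)
    (hineq : ∀ r : ℝ, 0 < r →
      deriv (deriv u) r + deriv u r / r + Real.exp (2 * u r) ≤ 0) :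
    ∫⁻ x : EuclideanSpace ℝ (Fin 2), ENNReal.ofReal (Real.exp (2 * u ‖x‖))
      ≤ ENNReal.ofReal (4 * π) := by
  have hcont : Continuous fun s => exp (2 * u s) := by fun_prop (disch := exact hu.continuous)
  have hradial : ∫⁻ r in Ioi 0, ENNReal.ofReal r * ENNReal.ofReal (exp (2 * u r))
      ≤ ENNReal.ofReal 2 := by
    rw [setLIntegral_congr_fun measurableSet_Ioi fun r hr => (ENNReal.ofReal_mul hr.out.le).symm]
    refine lintegral_Ioi_ofReal_le_of_intervalIntegral_le
      (fun R => (continuous_id.mul hcont).integrableOn_Ioc) (fun r hr => by positivity)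
      fun R hR => ?_
    have hA := conformalArea_le_four_pi hu hineq hR
    rw [conformalArea] at hA
    nlinarith [pi_pos]
  calc ∫⁻ x : EuclideanSpace ℝ (Fin 2), ENNReal.ofReal (exp (2 * u ‖x‖))
      = ENNReal.ofReal (2 * π) *
          ∫⁻ r in Ioi 0, ENNReal.ofReal r * ENNReal.ofReal (exp (2 * u r)) :=
        lintegral_fun_norm_euclideanSpace_fin_two hcont.measurable.ennreal_ofReal
    _ ≤ ENNReal.ofReal (2 * π) * ENNReal.ofReal 2 := by gcongr
    _ = ENNReal.ofReal (4 * π) := by rw [← ENNReal.ofReal_mul (by positivity)]; ring_nf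

theorem stmt_10 (u : ℝ → ℝ) (hu : ContDiff ℝ 2 u) (hu0 : deriv u 0 = 0)
    (hineq : ∀ r : ℝ, 0 < r →
      deriv (deriv u) r + deriv u r / r + Real.exp (2 * u r) ≤ 0) :
    ∫⁻ x : EuclideanSpace ℝ (Fin 2), ENNReal.ofReal (Real.exp (2 * u ‖x‖))
      ≤ ENNReal.ofReal (4 * π) :=
  stmt_10_general u hu hineq
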